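/- Let m ≥ 0 and n ≥ 0, let ε_2, …, ε_{m+2} ∈ {0,1}, and suppose ε_i = 1 exactly for the indices i_1 < i_2 < ⋯ < i_k among {2, …, m+1} (with k ≥ 0), and ε_i = 0 for all other i with 2 ≤ i ≤ m+1. If either (n ≡ 2^{m+1} (mod 2^{m+2}) and k is odd) or (n ≡ 0 (mod 2^{m+2}) and k is even), then: (a) P_{m,0}^{ε_2,…,ε_{m+2}}(n) is empty unless ε_{m+2} = 0, i.e., P_{m,0}^{ε_2,…,ε_{m+1},ε_{m+2}}(n) = P_{m,0}^{ε_2,…,ε_{m+1},0}(n); and (b) the composite σ ∘ τ_{i_1} ∘ τ_{i_2} ∘ ⋯ ∘ τ_{i_k} is a bijection from P_{m,0}^{ε_2,…,ε_{m+2}}(n) onto P_m((n − k·2^{m+1})/2). In particular |P_{m,0}^{ε_2,…,ε_{m+2}}(n)| = r_m((n − k·2^{m+1})/2). -/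

import Mathlib

/-- The integer partitioned by the binary partition `α`, where `α i` is the
number of parts equal to `2 ^ i` (so `α i` is the `α_{i+1}` of the paper). -/
def binWeight (α : ℕ →₀ ℕ) : ℕ := α.sum fun i a => a * 2 ^ i

/-- `Pm m n` is the set of binary partitions of `n` satisfying the divisibility
conditions `2 ^ (m + 2 - i) ∣ α_i` for `1 ≤ i ≤ m + 1` (written here with the
index shifted down by one).  For `n < 0` the set is empty. -/
def Pm (m : ℕ) (n : ℤ) : Set (ℕ →₀ ℕ) :=
  {α | (binWeight α : ℤ) = n ∧ ∀ i ≤ m, 2 ^ (m + 1 - i) ∣ α i}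

/-- `r m n` is the number of binary partitions of `n` satisfying the divisibility
conditions `2 ^ (m + 2 - i) ∣ α_i` for `1 ≤ i ≤ m + 1`. -/
noncomputable def r (m : ℕ) (n : ℤ) : ℕ := Nat.card (Pm m n)

/-- `Pm0 m n ε` is the set `P_{m,0}^{ε₂,…,ε_{m+2}}(n)` of partitions in `Pm m n`
with `α₁ = 0` and `α_i ≡ ε_i · 2^(m+2-i) (mod 2^(m+3-i))` for `2 ≤ i ≤ m + 2`;
all indices (of both `α` and `ε`) are shifted down by one here, so the
congruences read `α i ≡ ε i · 2^(m+1-i) (mod 2^(m+2-i))` for `1 ≤ i ≤ m + 1`. -/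
def Pm0 (m : ℕ) (n : ℤ) (ε : ℕ → ℕ) : Set (ℕ →₀ ℕ) :=
  {α | α ∈ Pm m n ∧ α 0 = 0 ∧
    ∀ i, 1 ≤ i → i ≤ m + 1 → α i ≡ ε i * 2 ^ (m + 1 - i) [MOD 2 ^ (m + 2 - i)]}

/-- The map `σ` sending `(α₁, α₂, α₃, …)` to `(α₂, α₃, …)`. -/
noncomputable def sigmaShift (α : ℕ →₀ ℕ) : ℕ →₀ ℕ :=
  Finsupp.comapDomain Nat.succ α (Nat.succ_injective.injOn)

/-!
Write `P = 2^(m+1)`. For `α ∈ P_{m,0}^ε(n)` the congruence at index `i` says that `α_i` is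
`ε_i · 2^(m+2-i)` plus a multiple of `2^(m+3-i)`. Removing the `ε`-parts (the maps `τ_i`) and
then shifting (`σ`) therefore gives exactly the partitions satisfying the divisibility conditions
of `P_m`, and this is reversible, so the composite is a bijection onto `P_m` of half the
remaining weight. Every element of `P_m(N)` has `P ∣ N`, so `n ≡ #{i | ε_i = 1} · P (mod 2P)`.
Under the parity hypothesis that makes `ε_{m+2} = 1` impossible.
-/

open Finset

lemma Nat.modEq_iff_le_and_dvd_sub {a c M : ℕ} (hc : c < M) :
    a ≡ c [MOD M] ↔ c ≤ a ∧ M ∣ a - c := by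
  constructor
  · intro h
    have hle : c ≤ a := by
      rw [Nat.ModEq, Nat.mod_eq_of_lt hc] at h
      exact h ▸ Nat.mod_le a M
    exact ⟨hle, (Nat.modEq_iff_dvd' hle).mp h.symm⟩
  · rintro ⟨hle, hdvd⟩
    exact ((Nat.modEq_iff_dvd' hle).mpr hdvd).symm

lemma Nat.mul_two_pow_mod_two_pow_succ (k m : ℕ) : k * 2 ^ m % 2 ^ (m + 1) = k % 2 * 2 ^ m := by
  rw [pow_succ', Nat.mul_mod_mul_right]

lemma Nat.mod_two_pow_succ_eq_of_parity {n k m : ℕ}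
    (h : (n % 2 ^ (m + 1) = 2 ^ m ∧ Odd k) ∨ (n % 2 ^ (m + 1) = 0 ∧ Even k)) :
    n % 2 ^ (m + 1) = k % 2 * 2 ^ m := by
  rcases h with ⟨hmod, hodd⟩ | ⟨hmod, heven⟩
  · rw [hmod, Nat.odd_iff.mp hodd, one_mul]
  · rw [hmod, Nat.even_iff.mp heven, zero_mul]

section BinaryPartition

lemma binWeight_add (α β : ℕ →₀ ℕ) : binWeight (α + β) = binWeight α + binWeight β :=
  Finsupp.sum_add_index' (fun _ => zero_mul _) (fun _ _ _ => add_mul _ _ _)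

lemma binWeight_single (j c : ℕ) : binWeight (Finsupp.single j c) = c * 2 ^ j :=
  Finsupp.sum_single_index (zero_mul _)

lemma binWeight_sum {ι : Type*} (s : Finset ι) (f : ι → ℕ →₀ ℕ) :
    binWeight (∑ i ∈ s, f i) = ∑ i ∈ s, binWeight (f i) :=
  (Finsupp.sum_finsetSum_index (fun _ => zero_mul _) (fun _ _ _ => add_mul _ _ _)).symm

lemma pow_dvd_binWeight {m : ℕ} {α : ℕ →₀ ℕ} (h : ∀ i ≤ m, 2 ^ (m + 1 - i) ∣ α i) :
    2 ^ (m + 1) ∣ binWeight α := by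
  refine Finset.dvd_sum fun i _ => ?_
  rcases le_or_gt i m with hi | hi
  · calc 2 ^ (m + 1) = 2 ^ (m + 1 - i) * 2 ^ i := by rw [← pow_add, Nat.sub_add_cancel (by omega)]
      _ ∣ α i * 2 ^ i := mul_dvd_mul_right (h i hi) _
  · exact Dvd.dvd.mul_left (pow_dvd_pow 2 hi) _

noncomputable def shiftUp (γ : ℕ →₀ ℕ) : ℕ →₀ ℕ := Finsupp.embDomain (addRightEmbedding 1) γ

@[simp]
lemma sigmaShift_apply (α : ℕ →₀ ℕ) (i : ℕ) : sigmaShift α i = α (i + 1) := rfl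

@[simp]
lemma shiftUp_apply_succ (γ : ℕ →₀ ℕ) (i : ℕ) : shiftUp γ (i + 1) = γ i :=
  Finsupp.embDomain_apply_self _ γ i

@[simp]
lemma shiftUp_apply_zero (γ : ℕ →₀ ℕ) : shiftUp γ 0 = 0 := by
  refine Finsupp.embDomain_of_notMem_range _ γ 0 ?_
  rintro ⟨i, hi⟩
  simp at hi

lemma sigmaShift_shiftUp (γ : ℕ →₀ ℕ) : sigmaShift (shiftUp γ) = γ := by
  ext i
  simp

lemma shiftUp_sigmaShift {α : ℕ →₀ ℕ} (h0 : α 0 = 0) : shiftUp (sigmaShift α) = α := by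
  ext (_ | i)
  · simp [h0]
  · simp

lemma binWeight_shiftUp (γ : ℕ →₀ ℕ) : binWeight (shiftUp γ) = 2 * binWeight γ := by
  simp only [binWeight, shiftUp, Finsupp.sum_embDomain, addRightEmbedding_apply, Finsupp.mul_sum]
  exact Finsupp.sum_congr fun i _ => by ring

/-- The partition removed by the maps `τ_j`, `j ∈ T`: one block `2^(m+1-j)` at each `j ∈ T`. -/
noncomputable def offset (m : ℕ) (T : Finset ℕ) : ℕ →₀ ℕ :=
  ∑ j ∈ T, Finsupp.single j (2 ^ (m + 1 - j))

lemma offset_apply (m : ℕ) (T : Finset ℕ) (i : ℕ) :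
    offset m T i = if i ∈ T then 2 ^ (m + 1 - i) else 0 := by
  simp only [offset, Finsupp.finsetSum_apply, Finsupp.single_apply]
  exact Finset.sum_ite_eq' T i _

lemma offset_apply_zero {m : ℕ} {T : Finset ℕ} (hT : T ⊆ Icc 1 (m + 1)) : offset m T 0 = 0 := by
  rw [offset_apply, if_neg fun h => by simpa using hT h]

lemma offset_apply_of_gt {m : ℕ} {T : Finset ℕ} (hT : T ⊆ Icc 1 (m + 1)) {i : ℕ} (hi : m + 1 < i) :
    offset m T i = 0 := by
  rw [offset_apply, if_neg fun h => by have := mem_Icc.mp (hT h); omega]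

lemma binWeight_offset {m : ℕ} {T : Finset ℕ} (hT : T ⊆ Icc 1 (m + 1)) :
    binWeight (offset m T) = #T * 2 ^ (m + 1) := by
  rw [offset, binWeight_sum, Finset.card_eq_sum_ones, Finset.sum_mul]
  refine Finset.sum_congr rfl fun j hj => ?_
  rw [binWeight_single, ← pow_add, one_mul, Nat.sub_add_cancel (mem_Icc.mp (hT hj)).2]

lemma modEq_offset_iff {m i : ℕ} (T : Finset ℕ) (hi : i ≤ m + 1) (a : ℕ) :
    a ≡ offset m T i [MOD 2 ^ (m + 2 - i)] ↔
      offset m T i ≤ a ∧ 2 ^ (m + 2 - i) ∣ a - offset m T i := by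
  refine Nat.modEq_iff_le_and_dvd_sub ?_
  rw [offset_apply]
  split_ifs
  · exact Nat.pow_lt_pow_right (by norm_num) (by omega)
  · positivity

lemma offset_apply_eq {m : ℕ} {ε : ℕ → ℕ} {T : Finset ℕ}
    (hε : ∀ j, 1 ≤ j → j ≤ m + 1 → ε j = 0 ∨ ε j = 1)
    (hεT : ∀ j, 1 ≤ j → j ≤ m + 1 → (ε j = 1 ↔ j ∈ T)) {i : ℕ} (h1 : 1 ≤ i) (h2 : i ≤ m + 1) :
    offset m T i = ε i * 2 ^ (m + 1 - i) := by
  rw [offset_apply]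
  by_cases hi : i ∈ T
  · rw [if_pos hi, (hεT i h1 h2).mpr hi, one_mul]
  · have : ε i = 0 := (hε i h1 h2).resolve_right fun h => hi ((hεT i h1 h2).mp h)
    rw [if_neg hi, this, zero_mul]

end BinaryPartition

section Pm0

/-- The divisibility conditions of `Pm` on indices `1, …, m` follow from the congruences. -/
lemma mem_Pm0_iff_modEq {m : ℕ} {n : ℤ} {ε : ℕ → ℕ} {α : ℕ →₀ ℕ} :
    α ∈ Pm0 m n ε ↔ (binWeight α : ℤ) = n ∧ α 0 = 0 ∧
      ∀ i, 1 ≤ i → i ≤ m + 1 → α i ≡ ε i * 2 ^ (m + 1 - i) [MOD 2 ^ (m + 2 - i)] := by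
  refine ⟨fun ⟨⟨hw, _⟩, h0, hcong⟩ => ⟨hw, h0, hcong⟩, fun ⟨hw, h0, hcong⟩ => ⟨⟨hw, ?_⟩, h0, hcong⟩⟩
  rintro (_ | i) hi
  · simp [h0]
  · refine ((hcong (i + 1) (by omega) (by omega)).dvd_iff ?_).mpr (dvd_mul_left _ _)
    exact pow_dvd_pow 2 (by omega)

lemma mem_Pm0_iff {m : ℕ} {n : ℤ} {ε : ℕ → ℕ} {T : Finset ℕ}
    (hε : ∀ j, 1 ≤ j → j ≤ m + 1 → ε j = 0 ∨ ε j = 1) (hT : T ⊆ Icc 1 (m + 1))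
    (hεT : ∀ j, 1 ≤ j → j ≤ m + 1 → (ε j = 1 ↔ j ∈ T)) {α : ℕ →₀ ℕ} :
    α ∈ Pm0 m n ε ↔ ∃ γ : ℕ →₀ ℕ, (∀ i ≤ m, 2 ^ (m + 1 - i) ∣ γ i) ∧
      2 * (binWeight γ : ℤ) + #T * 2 ^ (m + 1) = n ∧ shiftUp γ + offset m T = α := by
  have hcong_iff : ∀ (β : ℕ →₀ ℕ) i, 1 ≤ i → i ≤ m + 1 →
      (β i ≡ ε i * 2 ^ (m + 1 - i) [MOD 2 ^ (m + 2 - i)] ↔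
        offset m T i ≤ β i ∧ 2 ^ (m + 2 - i) ∣ β i - offset m T i) := fun β i h1 h2 => by
    rw [← offset_apply_eq hε hεT h1 h2, modEq_offset_iff T h2]
  have hweight : ∀ γ, (binWeight (shiftUp γ + offset m T) : ℤ) =
      2 * (binWeight γ : ℤ) + #T * 2 ^ (m + 1) := fun γ => by
    rw [binWeight_add, binWeight_shiftUp, binWeight_offset hT]
    push_cast
    rfl
  rw [mem_Pm0_iff_modEq]
  constructor
  · rintro ⟨hw, h0, hcong⟩
    have hle : offset m T ≤ α := by
      refine Finsupp.le_def.mpr fun i => ?_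
      rcases Nat.eq_zero_or_pos i with rfl | h1
      · exact (offset_apply_zero hT).trans_le (Nat.zero_le _)
      rcases le_or_gt i (m + 1) with h2 | h2
      · exact ((hcong_iff α i h1 h2).mp (hcong i h1 h2)).1
      · rw [offset_apply_of_gt hT h2]
        exact Nat.zero_le _
    have hα : shiftUp (sigmaShift (α - offset m T)) + offset m T = α := by
      rw [shiftUp_sigmaShift (by simp [h0]), tsub_add_cancel_of_le hle]
    refine ⟨sigmaShift (α - offset m T), fun i hi => ?_, by rw [← hweight, hα, hw], hα⟩
    have hdvd := ((hcong_iff α (i + 1) (by omega) (by omega)).mp (hcong _ (by omega) (by omega))).2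
    rwa [show m + 2 - (i + 1) = m + 1 - i by omega] at hdvd
  · rintro ⟨γ, hγ, hw, rfl⟩
    refine ⟨by rw [hweight, hw], by simp [offset_apply_zero hT], ?_⟩
    rintro (_ | i) h1 h2
    · omega
    rw [hcong_iff _ _ h1 h2, Finsupp.add_apply, shiftUp_apply_succ, add_tsub_cancel_right]
    rw [show m + 2 - (i + 1) = m + 1 - i by omega]
    exact ⟨Nat.le_add_left _ _, hγ i (by omega)⟩

lemma modEq_of_mem_Pm0 {m n : ℕ} {ε : ℕ → ℕ} {T : Finset ℕ}
    (hε : ∀ j, 1 ≤ j → j ≤ m + 1 → ε j = 0 ∨ ε j = 1) (hT : T ⊆ Icc 1 (m + 1))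
    (hεT : ∀ j, 1 ≤ j → j ≤ m + 1 → (ε j = 1 ↔ j ∈ T)) {α : ℕ →₀ ℕ} (hα : α ∈ Pm0 m n ε) :
    n ≡ #T * 2 ^ (m + 1) [MOD 2 ^ (m + 2)] := by
  obtain ⟨γ, hγ, hw, -⟩ := (mem_Pm0_iff hε hT hεT).mp hα
  have hn : 2 * binWeight γ + #T * 2 ^ (m + 1) = n := by exact_mod_cast hw
  have hdvd : 2 ^ (m + 2) ∣ 2 * binWeight γ := by
    rw [pow_succ']
    exact mul_dvd_mul_left 2 (pow_dvd_binWeight hγ)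
  rw [← hn]
  simpa using (Nat.modEq_zero_iff_dvd.mpr hdvd).add_right (#T * 2 ^ (m + 1))

lemma sigmaShift_shiftUp_add_sub (γ : ℕ →₀ ℕ) (β : ℕ →₀ ℕ) :
    sigmaShift (shiftUp γ + β - β) = γ := by
  rw [add_tsub_cancel_right, sigmaShift_shiftUp]

theorem bijOn_Pm0 {m : ℕ} {n : ℤ} {ε : ℕ → ℕ} {T : Finset ℕ}
    (hε : ∀ j, 1 ≤ j → j ≤ m + 1 → ε j = 0 ∨ ε j = 1) (hT : T ⊆ Icc 1 (m + 1))
    (hεT : ∀ j, 1 ≤ j → j ≤ m + 1 → (ε j = 1 ↔ j ∈ T)) (hn : Even n) :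
    Set.BijOn (fun α => sigmaShift (α - offset m T)) (Pm0 m n ε)
      (Pm m ((n - #T * 2 ^ (m + 1)) / 2)) := by
  refine Set.InvOn.bijOn (f' := fun γ => shiftUp γ + offset m T) ⟨?_, ?_⟩ ?_ ?_
  · intro α hα
    obtain ⟨γ, -, -, rfl⟩ := (mem_Pm0_iff hε hT hεT).mp hα
    simp only [sigmaShift_shiftUp_add_sub]
  · exact fun γ _ => sigmaShift_shiftUp_add_sub γ _
  · intro α hα
    obtain ⟨γ, hγ, hw, rfl⟩ := (mem_Pm0_iff hε hT hεT).mp hα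
    refine ⟨?_, by simpa only [sigmaShift_shiftUp_add_sub] using hγ⟩
    dsimp only
    rw [sigmaShift_shiftUp_add_sub, ← hw, add_sub_cancel_right,
      Int.mul_ediv_cancel_left _ two_ne_zero]
  · rintro γ ⟨hw, hγ⟩
    refine (mem_Pm0_iff hε hT hεT).mpr ⟨γ, hγ, ?_, rfl⟩
    have heven : Even ((#T : ℤ) * 2 ^ (m + 1)) := (even_two.pow_of_ne_zero (by omega)).mul_left _
    rw [hw, Int.two_mul_ediv_two_of_even (hn.sub heven), sub_add_cancel]

end Pm0

/-- Lemma (odd/even case (2)): with the indices of `ε` shifted down by one (so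
`ε j` here is the paper's `ε_{j+1}`), suppose `ε` takes values in `{0,1}` and
equals `1` on `{1, …, m}` exactly on the set `S` (the paper's `{i₁ < ⋯ < i_k}`),
with `k = |S|`.  If `n ≡ 2^(m+1) (mod 2^(m+2))` and `k` is odd, or
`n ≡ 0 (mod 2^(m+2))` and `k` is even, then:
(a) `P_{m,0}^{ε}(n)` is empty unless `ε_{m+2} = 0`, and
(b) when `ε_{m+2} = 0`, the composite `σ ∘ τ_{i₁} ∘ ⋯ ∘ τ_{i_k}` (which
subtracts `2^(m+1-j)` from the entry at each `j ∈ S` and then shifts) is a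
bijection from `P_{m,0}^{ε}(n)` onto `P_m((n - k·2^(m+1))/2)`; in particular
`|P_{m,0}^{ε}(n)| = r_m((n - k·2^(m+1))/2)`. -/
theorem stmt10 (m n : ℕ) (ε : ℕ → ℕ)
    (hε : ∀ j, 1 ≤ j → j ≤ m + 1 → ε j = 0 ∨ ε j = 1)
    (S : Finset ℕ) (hS : S ⊆ Finset.Icc 1 m)
    (hSε : ∀ j, 1 ≤ j → j ≤ m → (ε j = 1 ↔ j ∈ S))
    (k : ℕ) (hk : k = S.card)
    (h : (n % 2 ^ (m + 2) = 2 ^ (m + 1) ∧ Odd k) ∨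
         (n % 2 ^ (m + 2) = 0 ∧ Even k)) :
    (ε (m + 1) = 1 → Pm0 m n ε = ∅) ∧
    (ε (m + 1) = 0 →
      Set.BijOn
        (fun α : ℕ →₀ ℕ => sigmaShift
          (α - ∑ j ∈ S, Finsupp.single j (2 ^ (m + 1 - j))))
        (Pm0 m n ε) (Pm m (((n : ℤ) - k * 2 ^ (m + 1)) / 2)) ∧
      Nat.card (Pm0 m n ε) = r m (((n : ℤ) - k * 2 ^ (m + 1)) / 2)) := by
  have hmS : m + 1 ∉ S := fun h => by have := mem_Icc.mp (hS h); omega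
  have hS' : S ⊆ Icc 1 (m + 1) := hS.trans (Icc_subset_Icc_right (by omega))
  have hn : n % 2 ^ (m + 2) = k % 2 * 2 ^ (m + 1) := Nat.mod_two_pow_succ_eq_of_parity h
  refine ⟨fun htop => Set.eq_empty_of_forall_notMem fun α hα => ?_, fun htop => ?_⟩
  · have hεT : ∀ j, 1 ≤ j → j ≤ m + 1 → (ε j = 1 ↔ j ∈ insert (m + 1) S) := fun j h1 h2 => by
      rcases h2.lt_or_eq with h2 | rfl
      · rw [hSε j h1 (by omega), mem_insert, or_iff_right (by omega)]
      · simp [htop]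
    have hmod := modEq_of_mem_Pm0 hε (insert_subset (by simp) hS') hεT hα
    rw [card_insert_of_notMem hmS, ← hk, Nat.ModEq, Nat.mul_two_pow_mod_two_pow_succ, hn] at hmod
    have := Nat.eq_of_mul_eq_mul_right (by positivity) hmod
    omega
  · have hεT : ∀ j, 1 ≤ j → j ≤ m + 1 → (ε j = 1 ↔ j ∈ S) := fun j h1 h2 => by
      rcases h2.lt_or_eq with h2 | rfl
      · exact hSε j h1 (by omega)
      · simp [htop, hmS]
    have heven : Even (n : ℤ) := by
      have h2 : 2 ∣ n % 2 ^ (m + 2) := hn ▸ Dvd.dvd.mul_left (dvd_pow_self 2 m.succ_ne_zero) _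
      have h2n := (Nat.dvd_mod_iff (dvd_pow_self 2 (m + 1).succ_ne_zero)).mp h2
      exact (even_iff_two_dvd.mpr h2n).natCast
    have hbij := bijOn_Pm0 hε hS' hεT heven
    rw [hk]
    exact ⟨hbij, Nat.card_congr (hbij.equiv _)⟩
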